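/- Let (X, μ) be a probability space and T : X → X an invertible bimeasurable map preserving μ, with μ ergodic. Let d_1, d_2 ≥ 1 and let A_1 : X → GL(d_1,ℝ), A_2 : X → GL(d_2,ℝ) and B : X → Mat_{d_1×d_2}(ℝ) be measurable with log⁺‖A_1(·)‖, log⁺‖A_1(·)^{−1}‖, log⁺‖A_2(·)‖, log⁺‖A_2(·)^{−1}‖ and log⁺‖B(·)‖ all μ-integrable. Assume there are reals ν < λ such that for μ-almost every x, (1/n) log‖(A_1^n(x))^{−1}‖ → −λ and (1/n) log‖A_2^n(x)‖ → ν as n → ∞. Then for μ-almost every x the series Φ(x) = −Σ_{k=0}^∞ (A_1^{k+1}(x))^{−1} B(T^k x) A_2^k(x) converges absolutely, Φ is a measurable Mat_{d_1×d_2}(ℝ)-valued function, and for μ-almost every x it satisfies A_1(x) Φ(x) + B(x) = Φ(Tx) A_2(x). -/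

import Mathlib

set_option maxHeartbeats 1000000
open scoped ENNReal NNReal


open MeasureTheory Filter Real Set

/-- Operator norm of a matrix, for the Euclidean norms. -/
noncomputable def opNorm {m n : Type*} [Fintype m] [Fintype n] [DecidableEq n]
    (A : Matrix m n ℝ) : ℝ :=
  ‖LinearMap.toContinuousLinearMap (Matrix.toEuclideanLin A)‖

/-- The matrix cocycle `N^n(x) = N(T^{n-1}x) ⋯ N(x)`. -/
def cocycle {X ι : Type*} [Fintype ι] [DecidableEq ι] (T : X → X) (M : X → Matrix ι ι ℝ) :
    ℕ → X → Matrix ι ι ℝ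
  | 0, _ => 1
  | n + 1, x => cocycle T M n (T x) * M x

/-- Matrices carry the (Borel) product measurable structure. -/
instance matrixMeasurableSpace {m n : Type*} : MeasurableSpace (Matrix m n ℝ) :=
  inferInstanceAs (MeasurableSpace (m → n → ℝ))

section OpNormLemmas

theorem opNorm_nonneg' {m n : Type*} [Fintype m] [Fintype n] [DecidableEq n]
    (A : Matrix m n ℝ) : 0 ≤ opNorm A := norm_nonneg _

theorem toEuclideanLin_mul' {m n p : Type*} [Fintype m] [Fintype n] [Fintype p] [DecidableEq n]
    [DecidableEq p] (A : Matrix m n ℝ) (B : Matrix n p ℝ) :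
    Matrix.toEuclideanLin (A * B) = (Matrix.toEuclideanLin A).comp (Matrix.toEuclideanLin B) := by
  apply LinearMap.ext; intro v
  simp [Matrix.toEuclideanLin_apply, Matrix.toLin'_mul]

theorem opNorm_mul_le' {m n p : Type*} [Fintype m] [Fintype n] [Fintype p] [DecidableEq n]
    [DecidableEq p] (A : Matrix m n ℝ) (B : Matrix n p ℝ) :
    opNorm (A * B) ≤ opNorm A * opNorm B := by
  unfold opNorm
  rw [show LinearMap.toContinuousLinearMap (Matrix.toEuclideanLin (A * B)) =
      (LinearMap.toContinuousLinearMap (Matrix.toEuclideanLin A)).comp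
        (LinearMap.toContinuousLinearMap (Matrix.toEuclideanLin B)) by
    apply ContinuousLinearMap.coe_injective
    ext v
    simp [toEuclideanLin_mul']]
  exact ContinuousLinearMap.opNorm_comp_le _ _

theorem euclid_coord_le {ι : Type*} [Fintype ι] (v : EuclideanSpace ℝ ι) (i : ι) : |v i| ≤ ‖v‖ := by
  classical
  have := abs_real_inner_le_norm (EuclideanSpace.single i (1:ℝ)) v
  rw [EuclideanSpace.norm_single, norm_one, one_mul] at this
  rw [EuclideanSpace.inner_single_left] at this
  simpa using this

theorem entry_le_opNorm {m n : Type*} [Fintype m] [Fintype n] [DecidableEq n]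
    (A : Matrix m n ℝ) (i : m) (j : n) : |A i j| ≤ opNorm A := by
  classical
  have h := (LinearMap.toContinuousLinearMap (Matrix.toEuclideanLin A)).le_opNorm
    (EuclideanSpace.single j (1:ℝ))
  rw [EuclideanSpace.norm_single, norm_one, mul_one] at h
  refine le_trans (le_trans ?_ (euclid_coord_le
    ((LinearMap.toContinuousLinearMap (Matrix.toEuclideanLin A)) (EuclideanSpace.single j 1)) i)) h
  apply le_of_eq; congr 1
  rw [LinearMap.coe_toContinuousLinearMap', Matrix.toEuclideanLin_apply]
  show A i j = Matrix.mulVec A _ i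
  rw [Matrix.mulVec]
  show A i j = dotProduct (A i) _
  rw [dotProduct]
  have : ∀ k, (WithLp.ofLp (EuclideanSpace.single j (1:ℝ))) k
      = if k = j then (1:ℝ) else 0 := by
    intro k
    rw [show WithLp.ofLp (EuclideanSpace.single j (1:ℝ)) k
        = EuclideanSpace.single j (1:ℝ) k from rfl, EuclideanSpace.single_apply]
  simp only [this, mul_ite, mul_one, mul_zero]
  rw [Finset.sum_ite_eq']
  simp

theorem opNorm_pos' {m n : Type*} [Fintype m] [Fintype n] [DecidableEq n]
    (A : Matrix m n ℝ) (hA : A ≠ 0) : 0 < opNorm A := by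
  rcases lt_or_eq_of_le (norm_nonneg (LinearMap.toContinuousLinearMap (Matrix.toEuclideanLin A)))
    with h | h
  · exact h
  · exfalso; apply hA
    have h1 : LinearMap.toContinuousLinearMap (Matrix.toEuclideanLin A) = 0 := by
      rwa [eq_comm, norm_eq_zero] at h
    have h2 : Matrix.toEuclideanLin A = 0 := by
      have := congrArg ContinuousLinearMap.toLinearMap h1
      simpa using this
    exact (Matrix.toEuclideanLin : Matrix m n ℝ ≃ₗ[ℝ] _).injective (h2.trans (map_zero _).symm)

theorem continuous_opNorm {m n : Type*} [Fintype m] [Fintype n] [DecidableEq n] :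
    Continuous (opNorm (m := m) (n := n)) := by
  unfold opNorm
  exact (continuous_norm.comp (LinearMap.continuous_of_finiteDimensional
    (LinearMap.toContinuousLinearMap.toLinearMap.comp
      (Matrix.toEuclideanLin (𝕜 := ℝ) (m := m) (n := n)).toLinearMap)))

theorem measurable_opNorm {m n : Type*} [Fintype m] [Fintype n] [DecidableEq n] :
    Measurable (opNorm (m := m) (n := n)) := by
  have : OpensMeasurableSpace (Matrix m n ℝ) := inferInstanceAs (OpensMeasurableSpace (m → n → ℝ))
  exact continuous_opNorm.measurable

theorem isUnit_ne_zero_matrix {ι : Type*} [Fintype ι] [DecidableEq ι] [Nonempty ι]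
    {M : Matrix ι ι ℝ} (h : IsUnit M) : M ≠ 0 := by
  intro h0
  obtain ⟨u, hu⟩ := h
  have h1 : M * (↑u⁻¹ : Matrix ι ι ℝ) = 1 := by rw [← hu]; exact_mod_cast u.mul_inv
  rw [h0, zero_mul] at h1
  obtain ⟨i⟩ := ‹Nonempty ι›
  have := congrFun (congrFun h1 i) i
  rw [Matrix.zero_apply, Matrix.one_apply_eq] at this
  exact zero_ne_one this

theorem isUnit_inv_matrix {ι : Type*} [Fintype ι] [DecidableEq ι]
    {M : Matrix ι ι ℝ} (h : IsUnit M) : IsUnit M⁻¹ := by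
  rw [Matrix.isUnit_iff_isUnit_det] at h ⊢
  rw [Matrix.det_nonsing_inv, Ring.inverse_eq_inv]
  rw [isUnit_iff_ne_zero] at h ⊢
  exact inv_ne_zero h

theorem le_exp_logplus {b : ℝ} (hb : 0 ≤ b) : b ≤ Real.exp (max (Real.log b) 0) := by
  rcases le_or_gt b 1 with h | h
  · calc b ≤ 1 := h
      _ = Real.exp 0 := Real.exp_zero.symm
      _ ≤ _ := Real.exp_le_exp.mpr (le_max_right _ _)
  · have : Real.log b ≥ 0 := Real.log_nonneg h.le
    rw [max_eq_left this]
    rw [Real.exp_log (lt_trans zero_lt_one h)]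

end OpNormLemmas

section MeasurabilityLemmas

theorem measurable_entry' {m n : Type*} {X : Type*} [MeasurableSpace X]
    {f : X → Matrix m n ℝ} (hf : Measurable f) (i : m) (j : n) : Measurable fun x => f x i j :=
  (measurable_pi_apply j).comp ((measurable_pi_apply i).comp hf)

theorem measurable_matrix' {m n : Type*} {X : Type*} [MeasurableSpace X]
    {f : X → Matrix m n ℝ} (hf : ∀ i j, Measurable fun x => f x i j) : Measurable f :=
  measurable_pi_lambda _ fun i => measurable_pi_lambda _ fun j => hf i j

theorem Measurable.matrix_mul' {m n p : Type*} [Fintype n] {X : Type*} [MeasurableSpace X]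
    {f : X → Matrix m n ℝ} {g : X → Matrix n p ℝ} (hf : Measurable f) (hg : Measurable g) :
    Measurable (fun x => f x * g x) := by
  apply measurable_matrix'; intro i j
  show Measurable fun x => ∑ k, f x i k * g x k j
  exact Finset.measurable_sum _ fun k _ => (measurable_entry' hf i k).mul (measurable_entry' hg k j)

theorem measurable_det' {n : Type*} [Fintype n] [DecidableEq n] {X : Type*} [MeasurableSpace X]
    {f : X → Matrix n n ℝ} (hf : Measurable f) : Measurable fun x => (f x).det := by
  simp_rw [Matrix.det_apply]
  apply Finset.measurable_sum
  intro σ _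
  apply Measurable.const_smul
  exact Finset.measurable_prod _ fun i _ => measurable_entry' hf (σ i) i

theorem Measurable.matrix_inv' {n : Type*} [Fintype n] [DecidableEq n] {X : Type*}
    [MeasurableSpace X] {f : X → Matrix n n ℝ} (hf : Measurable f) :
    Measurable (fun x => (f x)⁻¹) := by
  simp_rw [Matrix.inv_def]
  apply measurable_matrix'; intro i j
  show Measurable fun x => Ring.inverse (f x).det * (f x).adjugate i j
  simp_rw [Ring.inverse_eq_inv]
  apply ((measurable_det' hf).inv).mul
  simp_rw [Matrix.adjugate_apply]
  apply measurable_det'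
  apply measurable_matrix'; intro a b
  show Measurable fun x => Matrix.updateRow (f x) j (Pi.single i 1) a b
  by_cases hab : a = j
  · subst hab; simp [Matrix.updateRow_self]
  · simp only [Matrix.updateRow_ne hab]; exact measurable_entry' hf a b

end MeasurabilityLemmas

section CocycleLemmas

theorem cocycle_succ' {X ι : Type*} [Fintype ι] [DecidableEq ι] (T : X → X)
    (M : X → Matrix ι ι ℝ) (n : ℕ) (x : X) :
    cocycle T M (n+1) x = M (T^[n] x) * cocycle T M n x := by
  induction n generalizing x with
  | zero => show cocycle T M 0 (T x) * M x = M x * 1; simp [cocycle]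
  | succ n ih =>
    show cocycle T M (n+1) (T x) * M x = M (T^[n+1] x) * (cocycle T M n (T x) * M x)
    rw [ih (T x), Function.iterate_succ_apply, mul_assoc]

theorem cocycle_isUnit {X ι : Type*} [Fintype ι] [DecidableEq ι] (T : X → X)
    (A : X → GL ι ℝ) (n : ℕ) (x : X) :
    IsUnit (cocycle T (fun y => (A y : Matrix ι ι ℝ)) n x) := by
  induction n generalizing x with
  | zero => exact isUnit_one
  | succ n ih => exact (ih (T x)).mul (A x).isUnit

theorem cocycle_measurable {X ι : Type*} [Fintype ι] [DecidableEq ι] [MeasurableSpace X]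
    {T : X → X} (hT : Measurable T) {M : X → Matrix ι ι ℝ} (hM : Measurable M) (n : ℕ) :
    Measurable (cocycle T M n) := by
  induction n with
  | zero => exact measurable_const
  | succ n ih =>
    show Measurable fun x => cocycle T M n (T x) * M x
    exact (ih.comp hT).matrix_mul' hM

theorem cocycle_inv_succ {X ι : Type*} [Fintype ι] [DecidableEq ι] (T : X → X)
    (A : X → GL ι ℝ) (n : ℕ) (x : X) :
    (cocycle T (fun y => (A y : Matrix ι ι ℝ)) (n+1) x)⁻¹
      = ((A x : Matrix ι ι ℝ))⁻¹ * (cocycle T (fun y => (A y : Matrix ι ι ℝ)) n (T x))⁻¹ := by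
  show (cocycle T (fun y => (A y : Matrix ι ι ℝ)) n (T x) * (A x : Matrix ι ι ℝ))⁻¹ = _
  rw [Matrix.mul_inv_rev]

theorem cocycle_one' {X ι : Type*} [Fintype ι] [DecidableEq ι] (T : X → X)
    (M : X → Matrix ι ι ℝ) (x : X) : cocycle T M 1 x = M x := by
  show cocycle T M 0 (T x) * M x = M x
  show (1 : Matrix ι ι ℝ) * M x = M x
  rw [one_mul]

end CocycleLemmas

section HasSumLemmas

theorem matrix_hasSum {m n : Type*} {f : ℕ → Matrix m n ℝ} {a : Matrix m n ℝ}
    (h : ∀ i j, HasSum (fun k => f k i j) (a i j)) : HasSum f a := by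
  have : HasSum (f := fun k => (Matrix.of.symm (f k) : m → n → ℝ)) (Matrix.of.symm a) := by
    rw [Pi.hasSum]; intro i; rw [Pi.hasSum]; intro j; exact h i j
  exact this

noncomputable def mulLeftCLM {m n p : Type*} [Fintype m] [Fintype n] [Fintype p]
    (A : Matrix m n ℝ) : Matrix n p ℝ →L[ℝ] Matrix m p ℝ :=
  LinearMap.toContinuousLinearMap
  { toFun := fun M => A * M
    map_add' := fun M N => Matrix.mul_add A M N
    map_smul' := fun c M => (Matrix.mul_smul A c M) }

noncomputable def mulRightCLM {m n p : Type*} [Fintype m] [Fintype n] [Fintype p]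
    (A : Matrix n p ℝ) : Matrix m n ℝ →L[ℝ] Matrix m p ℝ :=
  LinearMap.toContinuousLinearMap
  { toFun := fun M => M * A
    map_add' := fun M N => Matrix.add_mul M N A
    map_smul' := fun c M => (Matrix.smul_mul c M A) }

theorem hasSum_matrix_mul_left {m n p : Type*} [Fintype m] [Fintype n] [Fintype p]
    (A : Matrix m n ℝ) {f : ℕ → Matrix n p ℝ} {a : Matrix n p ℝ} (h : HasSum f a) :
    HasSum (fun k => A * f k) (A * a) := (mulLeftCLM A).hasSum h

theorem hasSum_matrix_mul_right {m n p : Type*} [Fintype m] [Fintype n] [Fintype p]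
    (A : Matrix n p ℝ) {f : ℕ → Matrix m n ℝ} {a : Matrix m n ℝ} (h : HasSum f a) :
    HasSum (fun k => f k * A) (a * A) := (mulRightCLM A).hasSum h

end HasSumLemmas

theorem tendsto_shift_div (a : ℕ → ℝ) (L : ℝ) (h : Tendsto (fun n : ℕ => a n / n) atTop (nhds L)) :
    Tendsto (fun n : ℕ => a (n+1) / n) atTop (nhds L) := by
  have h1 : Tendsto (fun n : ℕ => a (n+1) / ((n:ℝ)+1)) atTop (nhds L) :=
    ((tendsto_add_atTop_iff_nat 1).mpr h).congr (fun n => by norm_num)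
  have h2 : Tendsto (fun n : ℕ => ((n:ℝ)+1) / n) atTop (nhds 1) := by
    have h0 : Tendsto (fun n : ℕ => 1 + 1/(n:ℝ)) atTop (nhds (1 + 0)) :=
      tendsto_const_nhds.add tendsto_one_div_atTop_nhds_zero_nat
    rw [add_zero] at h0
    apply h0.congr' ?_
    filter_upwards [eventually_ge_atTop 1] with n hn
    have : (n:ℝ) ≠ 0 := by
      have : (1:ℝ) ≤ n := by exact_mod_cast hn
      linarith
    field_simp
  have h3 := h1.mul h2
  rw [mul_one] at h3
  apply h3.congr' ?_
  filter_upwards [eventually_ge_atTop 1] with n hn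
  have hne : ((n:ℝ)+1) ≠ 0 := by positivity
  field_simp

theorem tsum_meas_level_ne_top {X : Type*} [MeasurableSpace X] (μ : Measure X)
    [IsProbabilityMeasure μ] {g : X → ℝ} (hgm : Measurable g) (hg0 : ∀ x, 0 ≤ g x)
    (hgi : Integrable g μ) {ε : ℝ} (hε : 0 < ε) :
    ∑' n : ℕ, μ {x | ε * n ≤ g x} ≠ ⊤ := by
  rw [tsum_eq_zero_add' ENNReal.summable]
  apply ENNReal.add_ne_top.mpr
  constructor
  · exact (measure_lt_top μ _).ne
  · have key : ∑' n : ℕ, μ {x | ε * (n+1 : ℕ) ≤ g x}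
        ≤ ∫⁻ x, ENNReal.ofReal (g x / ε) ∂μ := by
      have hmeas : ∀ n : ℕ, MeasurableSet {x | ε * (n+1 : ℕ) ≤ g x} := fun n =>
        measurableSet_le measurable_const hgm
      calc ∑' n : ℕ, μ {x | ε * (n+1:ℕ) ≤ g x}
          = ∑' n : ℕ, ∫⁻ x, Set.indicator {x | ε * (n+1:ℕ) ≤ g x} (fun _ => (1:ℝ≥0∞)) x ∂μ := by
            congr 1; funext n
            rw [lintegral_indicator (hmeas n), setLIntegral_one]
        _ = ∫⁻ x, ∑' n : ℕ, Set.indicator {x | ε * (n+1:ℕ) ≤ g x} (fun _ => (1:ℝ≥0∞)) x ∂μ := by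
            exact (lintegral_tsum fun n => ((measurable_one.indicator (hmeas n)).aemeasurable)).symm
        _ ≤ ∫⁻ x, ENNReal.ofReal (g x / ε) ∂μ := by
            apply lintegral_mono; intro x
            have hfloor : ∀ n : ℕ, (x ∈ {x | ε * (n+1:ℕ) ≤ g x}) ↔ n < ⌊g x / ε⌋₊ := by
              intro n
              rw [Set.mem_setOf_eq, Nat.lt_iff_add_one_le,
                Nat.le_floor_iff (div_nonneg (hg0 x) hε.le)]
              constructor
              · intro h; rw [Nat.cast_succ] at h ⊢ ; rw [le_div_iff₀ hε]; linarith [h]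
              · intro h; rw [Nat.cast_succ] at h ⊢; rw [le_div_iff₀ hε] at h; linarith [h]
            calc ∑' n : ℕ, Set.indicator {x | ε * (n+1:ℕ) ≤ g x} (fun _ => (1:ℝ≥0∞)) x
                = ∑' n : ℕ, if n < ⌊g x / ε⌋₊ then (1:ℝ≥0∞) else 0 := by
                  congr 1; funext n
                  rw [Set.indicator_apply]
                  simp only [hfloor n]
              _ = ∑ n ∈ Finset.range ⌊g x / ε⌋₊, if n < ⌊g x / ε⌋₊ then (1:ℝ≥0∞) else 0 := by
                  apply tsum_eq_sum
                  intro n hn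
                  rw [Finset.mem_range, not_lt] at hn
                  simp [not_lt.mpr hn]
              _ = ⌊g x / ε⌋₊ := by
                  rw [Finset.sum_congr rfl fun n hn => if_pos (Finset.mem_range.mp hn)]
                  simp
              _ ≤ ENNReal.ofReal (g x / ε) := by
                  rw [← ENNReal.ofReal_natCast]
                  exact ENNReal.ofReal_le_ofReal (Nat.floor_le (div_nonneg (hg0 x) hε.le))
    apply ne_top_of_le_ne_top _ (by exact_mod_cast key)
    have : ∀ x, ENNReal.ofReal (g x / ε) = ENNReal.ofReal (g x) * ENNReal.ofReal (1/ε) := by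
      intro x
      rw [← ENNReal.ofReal_mul (hg0 x), mul_one_div]
    simp_rw [this]
    rw [lintegral_mul_const' _ _ ENNReal.ofReal_ne_top]
    apply ENNReal.mul_ne_top _ ENNReal.ofReal_ne_top
    apply ne_top_of_le_ne_top hgi.hasFiniteIntegral.ne
    apply lintegral_mono; intro x
    exact Real.ofReal_le_enorm (g x)

theorem ae_tendsto_comp_iterate_div {X : Type*} [MeasurableSpace X] (μ : Measure X)
    [IsProbabilityMeasure μ] {T : X → X} (hT : MeasurePreserving T μ μ)
    {g : X → ℝ} (hgm : Measurable g) (hg0 : ∀ x, 0 ≤ g x) (hgi : Integrable g μ) :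
    ∀ᵐ x ∂μ, Tendsto (fun n : ℕ => g (T^[n] x) / n) atTop (nhds 0) := by
  have key : ∀ m : ℕ, ∀ᵐ x ∂μ, ∀ᶠ n : ℕ in atTop, g (T^[n] x) < (1 / (m+1) : ℝ) * n := by
    intro m
    set ε : ℝ := 1 / (m+1) with hεdef
    have hε : 0 < ε := by positivity
    have hsum : ∑' n : ℕ, μ {x | ε * n ≤ g (T^[n] x)} ≠ ⊤ := by
      have : ∀ n : ℕ, μ {x | ε * n ≤ g (T^[n] x)} = μ {x | ε * n ≤ g x} := by
        intro n
        have : {x | ε * n ≤ g (T^[n] x)} = T^[n] ⁻¹' {x | ε * n ≤ g x} := rfl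
        rw [this, (hT.iterate n).measure_preimage
          (measurableSet_le measurable_const hgm).nullMeasurableSet]
      simp_rw [this]
      exact tsum_meas_level_ne_top μ hgm hg0 hgi hε
    have := measure_setOf_frequently_eq_zero (p := fun n x => ε * n ≤ g (T^[n] x)) hsum
    rw [← compl_compl {a | ∃ᶠ n in atTop, ε * ↑n ≤ g (T^[n] a)}] at this
    have h2 : ∀ᵐ x ∂μ, x ∈ {a | ∃ᶠ n in atTop, ε * ↑n ≤ g (T^[n] a)}ᶜ := by
      rw [ae_iff]
      rw [compl_compl] at this
      convert this using 2
      ext a; simp [Filter.frequently_atTop, Set.mem_setOf_eq]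
    filter_upwards [h2] with x hx
    rw [Set.mem_compl_iff, Set.mem_setOf_eq, Filter.not_frequently] at hx
    filter_upwards [hx] with n hn
    rw [mul_comm]
    exact lt_of_not_ge (by rwa [mul_comm] at hn)
  rw [← ae_all_iff] at key
  filter_upwards [key] with x hx
  rw [Metric.tendsto_atTop]
  intro δ hδ
  obtain ⟨m, hm⟩ := exists_nat_one_div_lt hδ
  obtain ⟨N, hN⟩ := (hx m).exists_forall_of_atTop
  refine ⟨max N 1, fun n hn => ?_⟩
  have hn1 : 1 ≤ n := le_trans (le_max_right _ _) hn
  have hnN : N ≤ n := le_trans (le_max_left _ _) hn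
  have hpos : (0:ℝ) < n := by exact_mod_cast hn1
  rw [Real.dist_eq, sub_zero, abs_of_nonneg (div_nonneg (hg0 _) hpos.le)]
  calc g (T^[n] x) / n < ((1 / (m+1) : ℝ) * n) / n := by
        exact div_lt_div_of_pos_right (hN n hnN) hpos
    _ = 1 / (m+1 : ℝ) := mul_div_assoc (1 / ((m:ℝ)+1)) _ _ ▸ by rw [div_self hpos.ne', mul_one]
    _ < δ := by exact_mod_cast hm

/-- the conjugacy `Φ(x) = -Σ_k (A₁^{k+1}(x))⁻¹ B(T^k x) A₂^k(x)` converges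
absolutely almost everywhere and solves `A₁(x) Φ(x) + B(x) = Φ(Tx) A₂(x)` when the top
exponent of `A₂` is smaller than the bottom exponent of `A₁`. -/
theorem block_triangular_conjugacy
    {X : Type*} [MeasurableSpace X] (μ : Measure X) [IsProbabilityMeasure μ]
    (T S : X → X) (hS : Measurable S) (hST : ∀ x, S (T x) = x) (hTS : ∀ x, T (S x) = x)
    (hErg : Ergodic T μ)
    {d₁ d₂ : ℕ} (hd₁ : 1 ≤ d₁) (hd₂ : 1 ≤ d₂)
    (A₁ : X → GL (Fin d₁) ℝ) (A₂ : X → GL (Fin d₂) ℝ)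
    (B : X → Matrix (Fin d₁) (Fin d₂) ℝ)
    (hA₁m : Measurable fun x => (A₁ x : Matrix (Fin d₁) (Fin d₁) ℝ))
    (hA₂m : Measurable fun x => (A₂ x : Matrix (Fin d₂) (Fin d₂) ℝ))
    (hBm : Measurable B)
    (hA₁int : Integrable (fun x => max (Real.log (opNorm ((A₁ x : Matrix (Fin d₁) (Fin d₁) ℝ)))) 0) μ)
    (hA₁invint : Integrable (fun x => max (Real.log (opNorm ((A₁ x : Matrix (Fin d₁) (Fin d₁) ℝ))⁻¹)) 0) μ)
    (hA₂int : Integrable (fun x => max (Real.log (opNorm ((A₂ x : Matrix (Fin d₂) (Fin d₂) ℝ)))) 0) μ)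
    (hA₂invint : Integrable (fun x => max (Real.log (opNorm ((A₂ x : Matrix (Fin d₂) (Fin d₂) ℝ))⁻¹)) 0) μ)
    (hBint : Integrable (fun x => max (Real.log (opNorm (B x))) 0) μ)
    (ν lam : ℝ) (hνlam : ν < lam)
    (hA₁lim : ∀ᵐ x ∂μ,
      Tendsto (fun n : ℕ => Real.log (opNorm
          (cocycle T (fun y => (A₁ y : Matrix (Fin d₁) (Fin d₁) ℝ)) n x)⁻¹) / n) atTop (nhds (-lam)))
    (hA₂lim : ∀ᵐ x ∂μ,
      Tendsto (fun n : ℕ => Real.log (opNorm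
          (cocycle T (fun y => (A₂ y : Matrix (Fin d₂) (Fin d₂) ℝ)) n x)) / n) atTop (nhds ν)) :
    ∃ Φ : X → Matrix (Fin d₁) (Fin d₂) ℝ, Measurable Φ ∧
      ∀ᵐ x ∂μ,
        (Summable fun k : ℕ => opNorm
          ((cocycle T (fun y => (A₁ y : Matrix (Fin d₁) (Fin d₁) ℝ)) (k + 1) x)⁻¹ *
            B (T^[k] x) * cocycle T (fun y => (A₂ y : Matrix (Fin d₂) (Fin d₂) ℝ)) k x)) ∧
        HasSum (fun k : ℕ =>
          -((cocycle T (fun y => (A₁ y : Matrix (Fin d₁) (Fin d₁) ℝ)) (k + 1) x)⁻¹ *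
            B (T^[k] x) * cocycle T (fun y => (A₂ y : Matrix (Fin d₂) (Fin d₂) ℝ)) k x)) (Φ x) ∧
        (A₁ x : Matrix (Fin d₁) (Fin d₁) ℝ) * Φ x + B x
          = Φ (T x) * (A₂ x : Matrix (Fin d₂) (Fin d₂) ℝ) := by
  classical
  have hne₁ : Nonempty (Fin d₁) := ⟨⟨0, hd₁⟩⟩
  have hne₂ : Nonempty (Fin d₂) := ⟨⟨0, hd₂⟩⟩
  have hT : Measurable T := hErg.toMeasurePreserving.measurable
  set M₁ : X → Matrix (Fin d₁) (Fin d₁) ℝ := fun y => (A₁ y : Matrix (Fin d₁) (Fin d₁) ℝ) with hM₁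
  set M₂ : X → Matrix (Fin d₂) (Fin d₂) ℝ := fun y => (A₂ y : Matrix (Fin d₂) (Fin d₂) ℝ) with hM₂
  set C : ℕ → X → Matrix (Fin d₁) (Fin d₂) ℝ := fun k x =>
    (cocycle T M₁ (k + 1) x)⁻¹ * B (T^[k] x) * cocycle T M₂ k x with hC
  -- measurability of C
  have hCm : ∀ k, Measurable (fun x => C k x) := by
    intro k
    exact (((cocycle_measurable hT hA₁m (k+1)).matrix_inv').matrix_mul'
      (hBm.comp (hT.iterate k))).matrix_mul' (cocycle_measurable hT hA₂m k)
  -- definition of Φ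
  set Φ : X → Matrix (Fin d₁) (Fin d₂) ℝ := fun x => Matrix.of fun i j =>
    liminf (fun N : ℕ => ∑ k ∈ Finset.range N, (-(C k x)) i j) atTop with hΦ
  have hΦm : Measurable Φ := by
    apply measurable_matrix'
    intro i j
    show Measurable fun x => liminf (fun N : ℕ => ∑ k ∈ Finset.range N, (-(C k x)) i j) atTop
    apply Measurable.liminf
    intro N
    apply Finset.measurable_sum
    intro k _
    have : Measurable fun x => (C k x) i j := measurable_entry' (hCm k) i j
    exact this.neg
  -- pointwise : summability implies HasSum to Φ
  have hΦsum : ∀ x, Summable (fun k => opNorm (C k x)) → HasSum (fun k => -(C k x)) (Φ x) := by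
    intro x hs
    apply matrix_hasSum
    intro i j
    have habs : Summable (fun k => |(-(C k x)) i j|) := by
      apply Summable.of_nonneg_of_le (fun k => abs_nonneg _) ?_ hs
      intro k
      show |(-(C k x)) i j| ≤ opNorm (C k x)
      rw [Matrix.neg_apply, abs_neg]
      exact entry_le_opNorm (C k x) i j
    have hsum_e : Summable (fun k => (-(C k x)) i j) := habs.of_abs
    have h1 := hsum_e.hasSum
    have h2 := h1.tendsto_sum_nat
    have h3 : Φ x i j = ∑' k, (-(C k x)) i j := by
      show liminf (fun N : ℕ => ∑ k ∈ Finset.range N, (-(C k x)) i j) atTop = _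
      exact h2.liminf_eq
    rw [h3]
    exact h1
  refine ⟨Φ, hΦm, ?_⟩
  -- a.e. summability
  have hBiter : ∀ᵐ x ∂μ, Tendsto
      (fun k : ℕ => (max (Real.log (opNorm (B (T^[k] x)))) 0) / k) atTop (nhds 0) := by
    have hgm : Measurable fun x => max (Real.log (opNorm (B x))) 0 :=
      ((Real.measurable_log.comp (measurable_opNorm.comp hBm)).max measurable_const)
    exact ae_tendsto_comp_iterate_div μ hErg.toMeasurePreserving hgm
      (fun x => le_max_right _ _) hBint
  have hsummable : ∀ᵐ x ∂μ, Summable (fun k => opNorm (C k x)) := by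
    filter_upwards [hA₁lim, hA₂lim, hBiter] with x h1 h2 h3
    set a : ℕ → ℝ := fun k => opNorm ((cocycle T M₁ (k+1) x)⁻¹) with ha
    set b : ℕ → ℝ := fun k => opNorm (B (T^[k] x)) with hb
    set c : ℕ → ℝ := fun k => opNorm (cocycle T M₂ k x) with hc
    have hapos : ∀ k, 0 < a k := fun k =>
      opNorm_pos' _ (isUnit_ne_zero_matrix (isUnit_inv_matrix (cocycle_isUnit T A₁ (k+1) x)))
    have hcpos : ∀ k, 0 < c k := fun k =>
      opNorm_pos' _ (isUnit_ne_zero_matrix (cocycle_isUnit T A₂ k x))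
    have hbnn : ∀ k, 0 ≤ b k := fun k => opNorm_nonneg' _
    have hla : Tendsto (fun k : ℕ => Real.log (a k) / k) atTop (nhds (-lam)) :=
      tendsto_shift_div (fun n => Real.log (opNorm ((cocycle T M₁ n x)⁻¹))) (-lam) h1
    set L : ℕ → ℝ := fun k => Real.log (a k) + max (Real.log (b k)) 0 + Real.log (c k) with hL
    have hLlim : Tendsto (fun k : ℕ => L k / k) atTop (nhds (ν - lam)) := by
      have := (hla.add h3).add h2
      have heq : ∀ k : ℕ, Real.log (a k) / k + (max (Real.log (b k)) 0) / k
          + Real.log (c k) / k = L k / k := by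
        intro k; rw [hL]; ring
      rw [show -lam + 0 + ν = ν - lam by ring] at this
      exact this.congr heq
    set c0 : ℝ := (ν - lam)/2 with hc0
    have hc0neg : c0 < 0 := by rw [hc0]; linarith
    have hev : ∀ᶠ k : ℕ in atTop, L k / k < c0 := by
      apply hLlim.eventually_lt_const
      rw [hc0]; linarith
    set r : ℝ := Real.exp c0 with hr
    have hr1 : r < 1 := Real.exp_lt_one_iff.mpr hc0neg
    have hr0 : 0 ≤ r := (Real.exp_pos c0).le
    apply Summable.of_norm_bounded_eventually_nat
      (summable_geometric_of_lt_one hr0 hr1)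
    filter_upwards [hev, eventually_ge_atTop 1] with k hk hk1
    have hkpos : (0:ℝ) < k := by exact_mod_cast hk1
    have hLk : L k < c0 * k := by
      rw [div_lt_iff₀ hkpos] at hk
      linarith [hk]
    have hbound : opNorm (C k x) ≤ a k * b k * c k := by
      calc opNorm (C k x) ≤ opNorm ((cocycle T M₁ (k+1) x)⁻¹ * B (T^[k] x)) * c k :=
            opNorm_mul_le' _ _
        _ ≤ (a k * b k) * c k :=
            mul_le_mul_of_nonneg_right (opNorm_mul_le' _ _) (hcpos k).le
    have hexp : a k * b k * c k ≤ Real.exp (L k) := by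
      rw [hL, Real.exp_add, Real.exp_add]
      have e1 : a k = Real.exp (Real.log (a k)) := (Real.exp_log (hapos k)).symm
      have e3 : c k = Real.exp (Real.log (c k)) := (Real.exp_log (hcpos k)).symm
      calc a k * b k * c k
          ≤ a k * Real.exp (max (Real.log (b k)) 0) * c k := by
            apply mul_le_mul_of_nonneg_right _ (hcpos k).le
            exact mul_le_mul_of_nonneg_left (le_exp_logplus (hbnn k)) (hapos k).le
        _ = Real.exp (Real.log (a k)) * Real.exp (max (Real.log (b k)) 0)
              * Real.exp (Real.log (c k)) := by rw [← e1, ← e3]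
    rw [Real.norm_eq_abs, abs_of_nonneg (opNorm_nonneg' _)]
    calc opNorm (C k x) ≤ Real.exp (L k) := le_trans hbound hexp
      _ ≤ Real.exp (c0 * k) := Real.exp_le_exp.mpr hLk.le
      _ = r ^ k := by rw [hr, ← Real.exp_nat_mul]; ring_nf
  -- now the equation
  have hsummableT : ∀ᵐ x ∂μ, Summable (fun k => opNorm (C k (T x))) :=
    hErg.toMeasurePreserving.quasiMeasurePreserving.ae hsummable
  filter_upwards [hsummable, hsummableT] with x hsx hsTx
  have hx : HasSum (fun k => -(C k x)) (Φ x) := hΦsum x hsx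
  have hTx : HasSum (fun k => -(C k (T x))) (Φ (T x)) := hΦsum (T x) hsTx
  refine ⟨hsx, hx, ?_⟩
  -- algebraic identities
  have hA₁unit : M₁ x * (M₁ x)⁻¹ = 1 := by
    rw [hM₁]
    rw [(Matrix.coe_units_inv (A₁ x)).symm]
    exact_mod_cast (A₁ x).mul_inv
  have hF0 : M₁ x * (-(C 0 x)) = -(B x) := by
    rw [hC]
    show M₁ x * -((cocycle T M₁ 1 x)⁻¹ * B (T^[0] x) * cocycle T M₂ 0 x) = -(B x)
    rw [cocycle_one']
    show M₁ x * -((M₁ x)⁻¹ * B x * (1 : Matrix (Fin d₂) (Fin d₂) ℝ)) = -(B x)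
    rw [Matrix.mul_one, Matrix.mul_neg, neg_inj, ← Matrix.mul_assoc, hA₁unit, Matrix.one_mul]
  have hFsucc : ∀ k : ℕ, M₁ x * (-(C (k+1) x)) = (-(C k (T x))) * M₂ x := by
    intro k
    rw [hC]
    show M₁ x * -((cocycle T M₁ (k+2) x)⁻¹ * B (T^[k+1] x) * cocycle T M₂ (k+1) x) = _
    have e1 : (cocycle T M₁ (k+2) x)⁻¹ = (M₁ x)⁻¹ * (cocycle T M₁ (k+1) (T x))⁻¹ :=
      cocycle_inv_succ T A₁ (k+1) x
    have e2 : cocycle T M₂ (k+1) x = cocycle T M₂ k (T x) * M₂ x := rfl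
    have e3 : (T^[k+1]) x = T^[k] (T x) := Function.iterate_succ_apply T k x
    rw [e1, e2, e3, Matrix.mul_neg, Matrix.neg_mul, neg_inj]
    show M₁ x * ((M₁ x)⁻¹ * (cocycle T M₁ (k+1) (T x))⁻¹ * B (T^[k] (T x))
          * (cocycle T M₂ k (T x) * M₂ x))
        = (cocycle T M₁ (k+1) (T x))⁻¹ * B (T^[k] (T x)) * cocycle T M₂ k (T x) * M₂ x
    simp only [← Matrix.mul_assoc]
    rw [hA₁unit, Matrix.one_mul]
  have hFsum : HasSum (fun k => M₁ x * (-(C k x))) (M₁ x * Φ x) := hasSum_matrix_mul_left _ hx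
  have hGsum : HasSum (fun k => (-(C k (T x))) * M₂ x) (Φ (T x) * M₂ x) :=
    hasSum_matrix_mul_right _ hTx
  have hshift : HasSum (fun k => M₁ x * (-(C (k+1) x))) (Φ (T x) * M₂ x) := by
    simpa only [hFsucc] using hGsum
  have h4 := (hasSum_nat_add_iff (f := fun k => M₁ x * (-(C k x))) 1).mp hshift
  rw [Finset.range_one, Finset.sum_singleton] at h4
  have h5 : M₁ x * Φ x = Φ (T x) * M₂ x + M₁ x * (-(C 0 x)) := hFsum.unique h4
  rw [hF0] at h5
  show M₁ x * Φ x + B x = Φ (T x) * M₂ x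
  rw [h5]
  abel
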